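/- Let x ∈ M_ℝ ≅ ℝⁿ and let Σ be a complete fan with rays Σ(1). Define C_x := ⋂ {H_{ρ≥c} : ρ ∈ Σ(1), c ∈ ℤ, x ∈ H_{ρ≥c}} where H_{ρ≥c} := {m : ⟨m, ρ⟩ ≥ c}. Then C_x is a nonempty compact convex set containing x. -/

import Mathlib

/-
Since `c ≤ ⟨x, ρ⟩` holds for an integer `c` exactly when `c ≤ ⌊⟨x, ρ⟩⌋`, the set `C_x` is the
polyhedron `{m | ∀ ρ, ⌊⟨x, ρ⟩⌋ ≤ ⟨m, ρ⟩}`: it contains `x`, and as an intersection of closed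
half-spaces it is closed and convex. Writing any `v` as a nonnegative combination `∑ wᵢ uᵢ` of the
rays bounds `⟨m, v⟩` below by `∑ wᵢ ⌊⟨x, uᵢ⟩⌋` on `C_x`; taking `v = ±eⱼ` bounds every coordinate.
-/

open Finset

variable {n : ℕ}

/-- The standard pairing on `ℝⁿ`. -/
def dotR (m v : Fin n → ℝ) : ℝ := ∑ i, m i * v i

open Bornology

lemma intCast_le_imp_le_iff_floor_le {α : Type*} [Ring α] [LinearOrder α] [IsStrictOrderedRing α]
    [FloorRing α] {a b : α} : (∀ c : ℤ, (c : α) ≤ a → (c : α) ≤ b) ↔ (⌊a⌋ : α) ≤ b :=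
  ⟨fun h => h _ (Int.floor_le a),
    fun h _ hc => (Int.cast_le.2 (Int.le_floor.2 hc)).trans h⟩

section Polyhedron

variable {ι κ : Type*} [Fintype ι]

def polyhedron (u : κ → ι → ℝ) (b : κ → ℝ) : Set (ι → ℝ) :=
  {m | ∀ i, b i ≤ m ⬝ᵥ u i}

variable (u : κ → ι → ℝ) (b : κ → ℝ)

lemma isClosed_polyhedron : IsClosed (polyhedron u b) := by
  simp only [polyhedron, Set.ofPred_forall]
  exact isClosed_iInter fun i => isClosed_le continuous_const (by fun_prop)

lemma convex_polyhedron : Convex ℝ (polyhedron u b) := by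
  simp only [polyhedron, Set.ofPred_forall]
  exact convex_iInter fun i => convex_halfSpace_ge
    ⟨fun m m' => add_dotProduct m m' (u i), fun c m => smul_dotProduct c m (u i)⟩ (b i)

lemma le_dotProduct_sum_smul_of_mem_polyhedron [Fintype κ] {m : ι → ℝ}
    (hm : m ∈ polyhedron u b) {w : κ → ℝ} (hw : ∀ i, 0 ≤ w i) :
    ∑ i, w i * b i ≤ m ⬝ᵥ ∑ i, w i • u i := by
  simp only [dotProduct_sum, dotProduct_smul, smul_eq_mul]
  exact sum_le_sum fun i _ => mul_le_mul_of_nonneg_left (hm i) (hw i)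

lemma isBounded_of_forall_bddBelow_image_dotProduct {S : Set (ι → ℝ)}
    (h : ∀ v, BddBelow ((· ⬝ᵥ v) '' S)) : IsBounded S := by
  classical
  have heval : ∀ j, (· ⬝ᵥ Pi.single j 1) '' S = Function.eval j '' S := fun j =>
    Set.image_congr fun m _ => dotProduct_single_one m j
  have hneg : ∀ j, (· ⬝ᵥ -Pi.single j 1) '' S = -(Function.eval j '' S) := fun j => by
    rw [← Set.image_neg_eq_neg, Set.image_image]
    exact Set.image_congr fun m _ => by simp [dotProduct_neg]
  rw [isBounded_iff_bddBelow_bddAbove, bddBelow_pi, bddAbove_pi]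
  exact ⟨fun j => heval j ▸ h _, fun j => bddBelow_neg.1 (hneg j ▸ h _)⟩

lemma isCompact_polyhedron [Fintype κ]
    (hspan : ∀ v : ι → ℝ, ∃ w : κ → ℝ, (∀ i, 0 ≤ w i) ∧ v = ∑ i, w i • u i) :
    IsCompact (polyhedron u b) := by
  refine Metric.isCompact_of_isClosed_isBounded (isClosed_polyhedron u b)
    (isBounded_of_forall_bddBelow_image_dotProduct fun v => ?_)
  obtain ⟨w, hw, rfl⟩ := hspan v
  exact ⟨_, Set.forall_mem_image.2 fun _ hm =>
    le_dotProduct_sum_smul_of_mem_polyhedron u b hm hw⟩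

end Polyhedron

/-- let `x ∈ M_ℝ ≅ ℝⁿ` and let `u 1, …, u r` be the (primitive
generators of the) rays of a complete fan `Σ`, so that they positively span
`ℝⁿ`.  Then
`C_x := ⋂ {H_{ρ ≥ c} : ρ ∈ Σ(1), c ∈ ℤ, x ∈ H_{ρ ≥ c}}`, where
`H_{ρ ≥ c} = {m : ⟨m, ρ⟩ ≥ c}`, is a nonempty compact convex set containing
`x`. -/
theorem stmt15 (r : ℕ) (u : Fin r → (Fin n → ℝ))
    (hspan : ∀ v : Fin n → ℝ, ∃ w : Fin r → ℝ,
      (∀ i, 0 ≤ w i) ∧ v = ∑ i, w i • u i)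
    (x : Fin n → ℝ) :
    x ∈ {m : Fin n → ℝ | ∀ (i : Fin r) (c : ℤ),
        (c : ℝ) ≤ dotR x (u i) → (c : ℝ) ≤ dotR m (u i)} ∧
    Convex ℝ {m : Fin n → ℝ | ∀ (i : Fin r) (c : ℤ),
        (c : ℝ) ≤ dotR x (u i) → (c : ℝ) ≤ dotR m (u i)} ∧
    IsCompact {m : Fin n → ℝ | ∀ (i : Fin r) (c : ℤ),
        (c : ℝ) ≤ dotR x (u i) → (c : ℝ) ≤ dotR m (u i)} ∧
    Set.Nonempty {m : Fin n → ℝ | ∀ (i : Fin r) (c : ℤ),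
        (c : ℝ) ≤ dotR x (u i) → (c : ℝ) ≤ dotR m (u i)} := by
  have hC : {m : Fin n → ℝ | ∀ (i : Fin r) (c : ℤ),
      (c : ℝ) ≤ dotR x (u i) → (c : ℝ) ≤ dotR m (u i)} =
      polyhedron u fun i => (⌊x ⬝ᵥ u i⌋ : ℝ) := by
    ext m
    exact forall_congr' fun i => intCast_le_imp_le_iff_floor_le  -- `dotR` unfolds to `⬝ᵥ`
  have hx : x ∈ polyhedron u fun i => (⌊x ⬝ᵥ u i⌋ : ℝ) := fun i => Int.floor_le _
  rw [hC]
  exact ⟨hx, convex_polyhedron _ _, isCompact_polyhedron _ _ hspan, x, hx⟩
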